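/- arXiv:2512.06704 — 2 statements merged into one kernel-verified Lean document; each statement's English description precedes it below -/
import Mathlib

section
/- If the master-formula λ-bracket satisfies the PVA-Jacobi identity for every triple of generators (u^i, u^j, u^k), then it satisfies the PVA-Jacobi identity for every triple of shifted generators (u^i_M, u^j_N, u^k_P) with arbitrary M, N, P ∈ ℤ^D (where u^i_M denotes the variable indexed by (i, M), viewed as an element of A). -/
open MvPolynomial

namespace MPVA

/-- The algebra of difference polynomials in `ℓ` generators on a `D`-dimensional lattice:
polynomials over `ℂ` in the variables `u^i_N`, `i ∈ Fin ℓ`, `N ∈ ℤ^D`. -/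
abbrev A (ℓ D : ℕ) := MvPolynomial (Fin ℓ × (Fin D → ℤ)) ℂ

variable {ℓ D : ℕ}

/-- The shift automorphism `S^M` sending `u^i_N` to `u^i_{N+M}`. -/
noncomputable def Sh (M : Fin D → ℤ) : A ℓ D ≃ₐ[ℂ] A ℓ D :=
  renameEquiv ℂ ((Equiv.refl (Fin ℓ)).prodCongr (Equiv.addRight M))

/-- The `α`-th standard basis vector `E_α ∈ ℤ^D`. -/
def E (α : Fin D) : Fin D → ℤ := fun β => if β = α then 1 else 0

/-- Coefficient `B_T(f,g)` of `λ^T` in the master-formula λ-bracket `{f_λ g}` determined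
by the generator coefficients `{u^i_λ u^j} = Σ_T (P j i T)·λ^T`:
`{f_λ g} = Σ_{i,j,M,N,T'} (∂g/∂u^j_N)·S^N(P^{ji}_{T'})·S^{N+T'−M}(∂f/∂u^i_M)·λ^{N+T'−M}`. -/
noncomputable def B (P : Fin ℓ → Fin ℓ → (Fin D → ℤ) → A ℓ D)
    (T : Fin D → ℤ) (f g : A ℓ D) : A ℓ D :=
  ∑ᶠ (i : Fin ℓ) (j : Fin ℓ) (M : Fin D → ℤ) (N : Fin D → ℤ),
    (pderiv (j, N) g) * (Sh N (P j i (T - N + M))) * (Sh T (pderiv (i, M) f))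

/-- The family of generator coefficients has only finitely many nonzero members. -/
def FinSupp (P : Fin ℓ → Fin ℓ → (Fin D → ℤ) → A ℓ D) : Prop :=
  {x : (Fin ℓ × Fin ℓ) × (Fin D → ℤ) | P x.1.1 x.1.2 x.2 ≠ 0}.Finite

/-- The PVA-Jacobi identity for the triple `(f,g,h)`, written coefficient-wise
(for all `T, U ∈ ℤ^D`, the coefficient of `λ^T μ^U` in
`Σ_U {f_λ B_U(g,h)}μ^U − Σ_T {g_μ B_T(f,h)}λ^T = Σ_{T,U} B_U(B_T(f,g),h)λ^{T+U}μ^U`). -/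
def Jacobi (P : Fin ℓ → Fin ℓ → (Fin D → ℤ) → A ℓ D) (f g h : A ℓ D) : Prop :=
  ∀ T U : Fin D → ℤ,
    B P T f (B P U g h) - B P U g (B P T f h) = B P U (B P (T - U) f g) h

/-!
The shifts are compatible with the master formula up to reindexing:
`B_T(S^K f, g) = B_{T+K}(f, g)` and `B_T(f, S^K g) = S^K B_{T-K}(f, g)`.
Hence the Jacobi identity for `(S^K f, S^L g, S^Q h)` at `(T, U)` is `S^Q` applied to the
identity for `(f, g, h)` at `(T + K - Q, U + L - Q)`, and `u^i_M = S^M u^i_0`.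
-/

lemma Sh_Sh (K T : Fin D → ℤ) (p : A ℓ D) : Sh T (Sh K p) = Sh (K + T) p := by
  simp only [Sh, renameEquiv_apply, rename_rename]
  congr 1
  ext ⟨i, N⟩
  simp [add_assoc]

lemma Sh_X (M : Fin D → ℤ) (i : Fin ℓ) (N : Fin D → ℤ) :
    Sh M (X (i, N) : A ℓ D) = X (i, N + M) := by
  simp [Sh]

lemma pderiv_Sh (K : Fin D → ℤ) (i : Fin ℓ) (M : Fin D → ℤ) (f : A ℓ D) :
    pderiv (i, M) (Sh K f) = Sh K (pderiv (i, M - K) f) := by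
  simpa [Sh] using pderiv_rename
    (f := ((Equiv.refl (Fin ℓ)).prodCongr (Equiv.addRight K) : _ ≃ _)) (Equiv.injective _) (i, M - K) f

lemma Sh_finsum {α : Sort*} (K : Fin D → ℤ) (f : α → A ℓ D) :
    Sh K (∑ᶠ x, f x) = ∑ᶠ x, Sh K (f x) :=
  (Sh K).toAddEquiv.map_finsum f

section Bracket

variable (P : Fin ℓ → Fin ℓ → (Fin D → ℤ) → A ℓ D)

lemma B_Sh_left (T K : Fin D → ℤ) (f g : A ℓ D) : B P T (Sh K f) g = B P (T + K) f g := by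
  unfold B
  refine finsum_congr fun i => finsum_congr fun j => ?_
  refine (finsum_comp_equiv (Equiv.addRight K)).symm.trans ?_
  refine finsum_congr fun M => finsum_congr fun N => ?_
  rw [Equiv.coe_addRight, pderiv_Sh, add_sub_cancel_right, Sh_Sh, add_comm K T,
    show T - N + (M + K) = T + K - N + M by abel]

lemma B_Sh_right (T K : Fin D → ℤ) (f g : A ℓ D) :
    B P T f (Sh K g) = Sh K (B P (T - K) f g) := by
  unfold B
  simp only [Sh_finsum]
  refine finsum_congr fun i => finsum_congr fun j => finsum_congr fun M => ?_
  refine (finsum_comp_equiv (Equiv.addRight K)).symm.trans ?_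
  refine finsum_congr fun N => ?_
  rw [Equiv.coe_addRight, pderiv_Sh, add_sub_cancel_right, map_mul, map_mul, Sh_Sh, Sh_Sh,
    sub_add_cancel, show T - (N + K) + M = T - K - N + M by abel]

theorem Jacobi.Sh {f g h : A ℓ D} (hJ : Jacobi P f g h) (K L Q : Fin D → ℤ) :
    Jacobi P (Sh K f) (Sh L g) (Sh Q h) := by
  intro T U
  simp only [B_Sh_left, B_Sh_right, ← map_sub]
  congr 1
  rw [show U - Q + L = U + L - Q by abel, show T - Q + K = T + K - Q by abel,
    show T - U - L + K = T + K - Q - (U + L - Q) by abel]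
  exact hJ (T + K - Q) (U + L - Q)

end Bracket

theorem jacobi_shifted_generators_general (ℓ D : ℕ) (P : Fin ℓ → Fin ℓ → (Fin D → ℤ) → A ℓ D)
    (hgen : ∀ i j k : Fin ℓ,
      Jacobi P (X (i, (0 : Fin D → ℤ))) (X (j, (0 : Fin D → ℤ))) (X (k, (0 : Fin D → ℤ)))) :
    ∀ (i j k : Fin ℓ) (M N Q : Fin D → ℤ),
      Jacobi P (X (i, M)) (X (j, N)) (X (k, Q)) := by
  intro i j k M N Q
  have hX (a : Fin ℓ) (W : Fin D → ℤ) : (X (a, W) : A ℓ D) = Sh W (X (a, 0)) := by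
    rw [Sh_X, zero_add]
  rw [hX i M, hX j N, hX k Q]
  exact (hgen i j k).Sh P M N Q

/-- if the PVA-Jacobi identity holds for all triples of generators
`(u^i, u^j, u^k)`, then it holds for all triples of shifted generators
`(u^i_M, u^j_N, u^k_P)`. -/
theorem jacobi_shifted_generators (ℓ D : ℕ) (P : Fin ℓ → Fin ℓ → (Fin D → ℤ) → A ℓ D)
    (hP : FinSupp P)
    (hgen : ∀ i j k : Fin ℓ,
      Jacobi P (X (i, (0 : Fin D → ℤ))) (X (j, (0 : Fin D → ℤ))) (X (k, (0 : Fin D → ℤ)))) :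
    ∀ (i j k : Fin ℓ) (M N Q : Fin D → ℤ),
      Jacobi P (X (i, M)) (X (j, N)) (X (k, Q)) :=
  jacobi_shifted_generators_general ℓ D P hgen

end MPVA
end

section
/- Let F₁₁, F₁₂, F₂₂, G₁, G₂ ∈ A all be nonzero, and consider the master-formula λ-bracket of the scalar two-dimensional operator of order (−2,2), i.e. with generator coefficients P_{(2,0)} = F₁₁, P_{(1,1)} = F₁₂, P_{(0,2)} = F₂₂, P_{(1,0)} = G₁, P_{(0,1)} = G₂, with P_{−L} = −S^{−L}(P_L) for L ∈ {(2,0),(1,1),(0,2),(1,0),(0,1)}, and P_T = 0 for all other T ∈ ℤ². If this λ-bracket satisfies the PVA-Jacobi identity for the triple (u, u, u), then F₁₁ depends only on u, u_{10}, u_{20}; F₁₂ depends only on u, u_{10}, u_{01}, u_{11}; F₂₂ depends only on u, u_{01}, u_{02}; G₁ depends only on u, u_{10}; and G₂ depends only on u, u_{01}. -/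
/-! The Jacobi identity for `(u, u, u)` at `λ^{T₀} μ^W` with `P_W = P_{T₀ - W} = 0` reads
`B_W(u, P_{T₀}) = Σ_N ∂P_{T₀}/∂u_N · S^N P_{W - N} = 0`. Let `φ` be a linear functional whose
maximum `c` on the support of `P` is attained only at `K₀`, with `-c ≤ φ` on the support (here
`φ = ±(coordinate α)` and `K₀ = ±2 E_α`, since the support lies in the ℓ¹-ball of radius 2), and
let `u_M` be a variable of `P_{T₀}` maximizing `φ`. If `φ M > max 0 (φ T₀)`, then `W = M + K₀` has
`φ W > c` and `φ (T₀ - W) < -c`, and the sum collapses to its term `N = M`, which is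
`∂P_{T₀}/∂u_M · S^M P_{K₀} ≠ 0`. So every variable `u_N` of `P_T` has `N` in the box spanned by
`0` and `T`. -/

open MvPolynomial

namespace MPVA

variable {ℓ D : ℕ}

/-- For `D = 2`: the lattice point `(m,n) ∈ ℤ²`. -/
def v (m n : ℤ) : Fin 2 → ℤ := ![m, n]

/-- For `D = 2`, `ℓ = 1`: the variable `u_{mn}` of the scalar two-dimensional algebra. -/
noncomputable def uu (m n : ℤ) : A 1 2 := X ((0 : Fin 1), v m n)

/-- Generator coefficients of the scalar two-dimensional operator of order `(−2,2)`:
`P_{(2,0)} = F₁₁`, `P_{(1,1)} = F₁₂`, `P_{(0,2)} = F₂₂`, `P_{(1,0)} = G₁`,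
`P_{(0,1)} = G₂`, with `P_{−L} = −S^{−L}(P_L)` and all other coefficients zero. -/
noncomputable def P2 (F11 F12 F22 G1 G2 : A 1 2) :
    Fin 1 → Fin 1 → (Fin 2 → ℤ) → A 1 2 :=
  fun _ _ T =>
    if T = v 2 0 then F11
    else if T = v 1 1 then F12
    else if T = v 0 2 then F22
    else if T = v 1 0 then G1
    else if T = v 0 1 then G2
    else if T = v (-2) 0 then -(Sh (v (-2) 0) F11)
    else if T = v (-1) (-1) then -(Sh (v (-1) (-1)) F12)
    else if T = v 0 (-2) then -(Sh (v 0 (-2)) F22)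
    else if T = v (-1) 0 then -(Sh (v (-1) 0) G1)
    else if T = v 0 (-1) then -(Sh (v 0 (-1)) G2)
    else 0

lemma Sh_zero (x : A ℓ D) : Sh 0 x = x := by
  simp [Sh]

lemma B_zero_left (P : Fin ℓ → Fin ℓ → (Fin D → ℤ) → A ℓ D) (T : Fin D → ℤ) (g : A ℓ D) :
    B P T 0 g = 0 := by
  simp only [B, map_zero, mul_zero, finsum_zero]

lemma B_zero_right (P : Fin ℓ → Fin ℓ → (Fin D → ℤ) → A ℓ D) (T : Fin D → ℤ) (f : A ℓ D) :
    B P T f 0 = 0 := by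
  simp only [B, map_zero, zero_mul, finsum_zero]

lemma eq_single_of_sum_abs_le {ι : Type*} [Fintype ι] [DecidableEq ι] {K : ι → ℤ} {α : ι}
    (h : ∑ β, |K β| ≤ |K α|) : K = Pi.single α (K α) := by
  have hrest : ∑ β ∈ Finset.univ.erase α, |K β| = 0 := by
    have := Finset.add_sum_erase Finset.univ (fun β => |K β|) (Finset.mem_univ α)
    have := Finset.sum_nonneg fun β (_ : β ∈ Finset.univ.erase α) => abs_nonneg (K β)
    omega
  funext β
  rcases eq_or_ne β α with rfl | hβ
  · simp
  · rw [Pi.single_eq_of_ne hβ, ← abs_eq_zero]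
    exact (Finset.sum_eq_zero_iff_of_nonneg fun β _ => abs_nonneg (K β)).mp hrest β
      (Finset.mem_erase.mpr ⟨hβ, Finset.mem_univ β⟩)

section Scalar

variable (P : Fin 1 → Fin 1 → (Fin D → ℤ) → A 1 D)

lemma B_X_left (T : Fin D → ℤ) (g : A 1 D) :
    B P T (X (0, 0)) g = ∑ᶠ N, pderiv (0, N) g * Sh N (P 0 0 (T - N)) := by
  simp only [B, finsum_unique, Fin.default_eq_zero]
  rw [finsum_eq_single _ 0]
  · simp [pderiv_X]
  · intro M hM
    simp [pderiv_X, Ne.symm hM]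

lemma B_X_X (T : Fin D → ℤ) : B P T (X (0, 0)) (X (0, 0)) = P 0 0 T := by
  rw [B_X_left, finsum_eq_single _ 0]
  · simp [pderiv_X, Sh_zero]
  · intro N hN
    simp [pderiv_X, Ne.symm hN]

lemma B_X_eq_zero_of_jacobi (hJ : Jacobi P (X (0, 0)) (X (0, 0)) (X (0, 0)))
    {T₀ W : Fin D → ℤ} (hW : P 0 0 W = 0) (hTW : P 0 0 (T₀ - W) = 0) :
    B P W (X (0, 0)) (P 0 0 T₀) = 0 := by
  simpa [B_X_X, hW, hTW, B_zero_left, B_zero_right] using hJ T₀ W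

lemma finite_pderiv_ne_zero (F : A 1 D) : {N : Fin D → ℤ | pderiv (0, N) F ≠ 0}.Finite :=
  (F.vars.finite_toSet.image Prod.snd).subset fun N hN =>
    ⟨(0, N), by_contra fun hv => hN (pderiv_eq_zero_of_notMem_vars hv), rfl⟩

lemma le_max_of_pderiv_ne_zero (hJ : Jacobi P (X (0, 0)) (X (0, 0)) (X (0, 0)))
    (φ : (Fin D → ℤ) →+ ℤ) {K₀ : Fin D → ℤ} (hK₀ : P 0 0 K₀ ≠ 0)
    (htop : ∀ K, P 0 0 K ≠ 0 → K ≠ K₀ → φ K < φ K₀)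
    (hbot : ∀ K, P 0 0 K ≠ 0 → -φ K₀ ≤ φ K) (T₀ : Fin D → ℤ) {N₀ : Fin D → ℤ}
    (hN₀ : pderiv (0, N₀) (P 0 0 T₀) ≠ 0) : φ N₀ ≤ max 0 (φ T₀) := by
  have hle : ∀ K, P 0 0 K ≠ 0 → φ K ≤ φ K₀ := fun K hK =>
    (eq_or_ne K K₀).elim (fun h => h ▸ le_rfl) fun h => (htop K hK h).le
  obtain ⟨M, hM, hMmax⟩ :=
    Set.exists_max_image _ φ (finite_pderiv_ne_zero (P 0 0 T₀)) ⟨N₀, hN₀⟩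
  refine (hMmax N₀ hN₀).trans (not_lt.mp fun hlt => ?_)
  have hM0 : 0 < φ M := (le_max_left _ _).trans_lt hlt
  have hMT : φ T₀ < φ M := (le_max_right _ _).trans_lt hlt
  have hW : P 0 0 (M + K₀) = 0 := by
    by_contra h
    have := hle _ h
    rw [map_add] at this
    omega
  have hTW : P 0 0 (T₀ - (M + K₀)) = 0 := by
    by_contra h
    have := hbot _ h
    rw [map_sub, map_add] at this
    omega
  have hB := B_X_eq_zero_of_jacobi P hJ hW hTW
  rw [B_X_left, finsum_eq_single _ M, add_sub_cancel_left] at hB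
  · exact mul_ne_zero hM (EmbeddingLike.map_ne_zero_iff.2 hK₀) hB
  intro N hN
  by_cases hP : P 0 0 (M + K₀ - N) = 0
  · simp [hP]
  have hK : M + K₀ - N ≠ K₀ := fun h =>
    hN (add_right_cancel (sub_eq_iff_eq_add'.mp h)).symm
  have hlt : φ M < φ N := by
    have := htop _ hP hK
    rw [map_sub, map_add] at this
    omega
  have : pderiv (0, N) (P 0 0 T₀) = 0 := by_contra fun h => (hMmax N h).not_gt hlt
  simp [this]

lemma mul_le_max_of_pderiv_ne_zero (hJ : Jacobi P (X (0, 0)) (X (0, 0)) (X (0, 0))) {c : ℤ}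
    (hsupp : ∀ K, P 0 0 K ≠ 0 → ∑ β, |K β| ≤ c) {ε : ℤ} (hε : |ε| = 1) (α : Fin D)
    (hc : P 0 0 (Pi.single α (ε * c)) ≠ 0) (T₀ : Fin D → ℤ) {N₀ : Fin D → ℤ}
    (hN₀ : pderiv (0, N₀) (P 0 0 T₀) ≠ 0) : ε * N₀ α ≤ max 0 (ε * T₀ α) := by
  have hεε : ε * ε = 1 := by rw [← abs_mul_abs_self, hε, one_mul]
  have habs (K : Fin D → ℤ) : |ε * K α| = |K α| := by rw [abs_mul, hε, one_mul]
  refine le_max_of_pderiv_ne_zero P hJ (ε • Pi.evalAddMonoidHom _ α) hc ?_ ?_ T₀ hN₀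
  all_goals
    intro K hK
    simp only [AddMonoidHom.smul_apply, Pi.evalAddMonoidHom_apply, Pi.single_eq_same,
      smul_eq_mul, ← mul_assoc, hεε, one_mul]
    have hKα : |K α| ≤ c :=
      (Finset.single_le_sum (fun β _ => abs_nonneg (K β)) (Finset.mem_univ α)).trans (hsupp K hK)
  · intro hne
    refine lt_of_le_of_ne ((habs K ▸ le_abs_self (ε * K α)).trans hKα) fun heq => hne ?_
    have hconc : ∑ β, |K β| ≤ |K α| := by
      rw [← habs, heq]
      exact (hsupp K hK).trans (le_abs_self c)
    rw [eq_single_of_sum_abs_le hconc, ← heq, ← mul_assoc, hεε, one_mul]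
  · exact (neg_le_neg hKα).trans (habs K ▸ neg_abs_le (ε * K α))

lemma mem_box_of_pderiv_ne_zero (hJ : Jacobi P (X (0, 0)) (X (0, 0)) (X (0, 0))) {c : ℤ}
    (hsupp : ∀ K, P 0 0 K ≠ 0 → ∑ β, |K β| ≤ c) (hpos : ∀ α, P 0 0 (Pi.single α c) ≠ 0)
    (hneg : ∀ α, P 0 0 (Pi.single α (-c)) ≠ 0) (T₀ : Fin D → ℤ) {N₀ : Fin D → ℤ}
    (hN₀ : pderiv (0, N₀) (P 0 0 T₀) ≠ 0) (α : Fin D) :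
    min 0 (T₀ α) ≤ N₀ α ∧ N₀ α ≤ max 0 (T₀ α) := by
  have hup := mul_le_max_of_pderiv_ne_zero P hJ hsupp (ε := 1) (by simp) α
    (by simpa using hpos α) T₀ hN₀
  have hdown := mul_le_max_of_pderiv_ne_zero P hJ hsupp (ε := -1) (by simp) α
    (by simpa using hneg α) T₀ hN₀
  omega

end Scalar

@[simp] lemma v_apply_zero (m n : ℤ) : v m n 0 = m := rfl

@[simp] lemma v_apply_one (m n : ℤ) : v m n 1 = n := rfl

@[simp] lemma v_inj {a b c d : ℤ} : v a b = v c d ↔ a = c ∧ b = d :=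
  ⟨fun h => ⟨congrFun h 0, congrFun h 1⟩, fun ⟨hac, hbd⟩ => hac ▸ hbd ▸ rfl⟩

lemma v_eta (K : Fin 2 → ℤ) : v (K 0) (K 1) = K := by
  funext i; fin_cases i <;> rfl

lemma single_zero_eq_v (a : ℤ) : Pi.single 0 a = v a 0 := by
  funext i; fin_cases i <;> rfl

lemma single_one_eq_v (a : ℤ) : Pi.single 1 a = v 0 a := by
  funext i; fin_cases i <;> rfl

lemma uu_zero_zero : uu 0 0 = X (0, 0) := by
  rw [uu, ← v_eta 0]; rfl

section P2

variable {F11 F12 F22 G1 G2 : A 1 2}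

lemma sum_abs_le_of_P2_ne_zero {K : Fin 2 → ℤ} (h : P2 F11 F12 F22 G1 G2 0 0 K ≠ 0) :
    ∑ β, |K β| ≤ 2 := by
  obtain ⟨a, b, rfl⟩ : ∃ a b, K = v a b := ⟨K 0, K 1, (v_eta K).symm⟩
  rw [Fin.sum_univ_two, v_apply_zero, v_apply_one]
  by_contra hgt
  apply h
  rcases abs_cases a with ⟨ha, _⟩ | ⟨ha, _⟩ <;> rcases abs_cases b with ⟨hb, _⟩ | ⟨hb, _⟩ <;>
    rw [ha, hb] at hgt <;> simp (disch := omega) only [P2, v_inj, if_neg]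

lemma pderiv_P2_eq_zero_of_outside_box (h11 : F11 ≠ 0) (h22 : F22 ≠ 0)
    (hJ : Jacobi (P2 F11 F12 F22 G1 G2) (uu 0 0) (uu 0 0) (uu 0 0)) (T : Fin 2 → ℤ) {m n : ℤ}
    (hmn : ¬(min 0 (T 0) ≤ m ∧ m ≤ max 0 (T 0) ∧ min 0 (T 1) ≤ n ∧ n ≤ max 0 (T 1))) :
    pderiv (0, v m n) (P2 F11 F12 F22 G1 G2 0 0 T) = 0 := by
  rw [uu_zero_zero] at hJ
  have hpos (α : Fin 2) : P2 F11 F12 F22 G1 G2 0 0 (Pi.single α 2) ≠ 0 := by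
    fin_cases α <;> simpa [single_zero_eq_v, single_one_eq_v, P2]
  have hneg (α : Fin 2) : P2 F11 F12 F22 G1 G2 0 0 (Pi.single α (-2)) ≠ 0 := by
    fin_cases α <;> simpa [single_zero_eq_v, single_one_eq_v, P2, EmbeddingLike.map_ne_zero_iff]
  by_contra h
  have hbox := mem_box_of_pderiv_ne_zero _ hJ (fun _ => sum_abs_le_of_P2_ne_zero) hpos hneg T h
  exact hmn ⟨(hbox 0).1, (hbox 0).2, (hbox 1).1, (hbox 1).2⟩

end P2

theorem second_order_coefficient_dependence_general (F11 F12 F22 G1 G2 : A 1 2)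
    (h11 : F11 ≠ 0) (h22 : F22 ≠ 0)
    (hJ : Jacobi (P2 F11 F12 F22 G1 G2) (uu 0 0) (uu 0 0) (uu 0 0)) :
    (∀ m n : ℤ, (m, n) ∉ ({(0,0), (1,0), (2,0)} : Set (ℤ × ℤ)) →
      pderiv ((0 : Fin 1), v m n) F11 = 0) ∧
    (∀ m n : ℤ, (m, n) ∉ ({(0,0), (1,0), (0,1), (1,1)} : Set (ℤ × ℤ)) →
      pderiv ((0 : Fin 1), v m n) F12 = 0) ∧
    (∀ m n : ℤ, (m, n) ∉ ({(0,0), (0,1), (0,2)} : Set (ℤ × ℤ)) →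
      pderiv ((0 : Fin 1), v m n) F22 = 0) ∧
    (∀ m n : ℤ, (m, n) ∉ ({(0,0), (1,0)} : Set (ℤ × ℤ)) →
      pderiv ((0 : Fin 1), v m n) G1 = 0) ∧
    (∀ m n : ℤ, (m, n) ∉ ({(0,0), (0,1)} : Set (ℤ × ℤ)) →
      pderiv ((0 : Fin 1), v m n) G2 = 0) := by
  have hbox := pderiv_P2_eq_zero_of_outside_box h11 h22 hJ
  refine ⟨fun m n hmn => ?_, fun m n hmn => ?_, fun m n hmn => ?_, fun m n hmn => ?_,
    fun m n hmn => ?_⟩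
  · simpa [P2] using hbox (v 2 0) (by simp at hmn ⊢; omega)
  · simpa [P2] using hbox (v 1 1) (by simp at hmn ⊢; omega)
  · simpa [P2] using hbox (v 0 2) (by simp at hmn ⊢; omega)
  · simpa [P2] using hbox (v 1 0) (by simp at hmn ⊢; omega)
  · simpa [P2] using hbox (v 0 1) (by simp at hmn ⊢; omega)

/-- if the λ-bracket of the `(−2,2)`-order operator satisfies the
PVA-Jacobi identity for `(u,u,u)`, then `F₁₁ = F₁₁(u,u_{10},u_{20})`,
`F₁₂ = F₁₂(u,u_{10},u_{01},u_{11})`, `F₂₂ = F₂₂(u,u_{01},u_{02})`, `G₁ = G₁(u,u_{10})`,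
`G₂ = G₂(u,u_{01})`. -/
theorem second_order_coefficient_dependence (F11 F12 F22 G1 G2 : A 1 2)
    (h11 : F11 ≠ 0) (h12 : F12 ≠ 0) (h22 : F22 ≠ 0) (hG1 : G1 ≠ 0) (hG2 : G2 ≠ 0)
    (hJ : Jacobi (P2 F11 F12 F22 G1 G2) (uu 0 0) (uu 0 0) (uu 0 0)) :
    (∀ m n : ℤ, (m, n) ∉ ({(0,0), (1,0), (2,0)} : Set (ℤ × ℤ)) →
      pderiv ((0 : Fin 1), v m n) F11 = 0) ∧
    (∀ m n : ℤ, (m, n) ∉ ({(0,0), (1,0), (0,1), (1,1)} : Set (ℤ × ℤ)) →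
      pderiv ((0 : Fin 1), v m n) F12 = 0) ∧
    (∀ m n : ℤ, (m, n) ∉ ({(0,0), (0,1), (0,2)} : Set (ℤ × ℤ)) →
      pderiv ((0 : Fin 1), v m n) F22 = 0) ∧
    (∀ m n : ℤ, (m, n) ∉ ({(0,0), (1,0)} : Set (ℤ × ℤ)) →
      pderiv ((0 : Fin 1), v m n) G1 = 0) ∧
    (∀ m n : ℤ, (m, n) ∉ ({(0,0), (0,1)} : Set (ℤ × ℤ)) →
      pderiv ((0 : Fin 1), v m n) G2 = 0) :=
  second_order_coefficient_dependence_general F11 F12 F22 G1 G2 h11 h22 hJ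

end MPVA
end
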